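/- Let H be a separable complex Hilbert space and let x, y : ℤ → H form a pair of dual Riesz bases for H. Then the family consisting of (n ↦ x_{3n} − x_{3n−1}), (n ↦ x_{3n}), and (n ↦ x_{3n+1} − x_{3n}) is a Riesz basis for H whose dual Riesz basis is (n ↦ −y_{3n−1}), (n ↦ y_{3n−1} + y_{3n} + y_{3n+1}), and (n ↦ y_{3n+1}) respectively; in particular, for every F ∈ H the family over (k,n) ∈ Fin 3 × ℤ whose terms are ⟨F, x_{3n} − x_{3n−1}⟩(−y_{3n−1}) for k = 0, ⟨F, x_{3n}⟩(y_{3n−1} + y_{3n} + y_{3n+1}) for k = 1, and ⟨F, x_{3n+1} − x_{3n}⟩ y_{3n+1} for k = 2, has sum F (unconditional convergence in H). -/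

import Mathlib

/-!
Write `x = T e` with `e` a Hilbert basis and `T` invertible. Cutting `ℤ` into the blocks
`{3n - 1, 3n, 3n + 1}`, the families `z` and `w` arise from `x` and `y` by applying fixed `3 × 3`
matrices `M` and `N` on every block, with `Nᴴ M = 1`. The block-diagonal operator `B_M` on `H` is
invertible with inverse `B_{M⁻¹}`, so `z = T B_M e` is a Riesz basis, and `Nᴴ M = 1` makes `z` and
`w` biorthogonal. A family biorthogonal to a Riesz basis `T e` must be `(T*)⁻¹ e`, which gives the
expansion `∑ ⟪f, w i⟫ z i = f`; exchanging the roles of the two families gives the other one.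
-/

noncomputable section
open scoped Classical

local notation "⟪" f ", " g "⟫" => @inner ℂ _ _ g f

/-- A family `x : ι → H` is a Riesz basis for `H` if it is the image of a Hilbert
(orthonormal) basis of `H` under a continuous linear equivalence of `H`. -/
def IsRieszBasis {H : Type*} [NormedAddCommGroup H] [InnerProductSpace ℂ H]
    {ι : Type*} (x : ι → H) : Prop :=
  ∃ (e : HilbertBasis ι ℂ H) (T : H ≃L[ℂ] H), ∀ i, x i = T (e i)

/-- Families `x, y : ι → H` form a pair of dual Riesz bases: both are Riesz bases,
they are biorthogonal, and `∑ᵢ ⟨f, yᵢ⟩ xᵢ = f` for every `f` (inner product linear in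
the first argument, conjugate-linear in the second). -/
def IsDualRieszBasisPair {H : Type*} [NormedAddCommGroup H] [InnerProductSpace ℂ H]
    {ι : Type*} (x y : ι → H) : Prop :=
  IsRieszBasis x ∧ IsRieszBasis y ∧
    (∀ i j, ⟪x i, y j⟫ = if i = j then (1 : ℂ) else 0) ∧
    ∀ f : H, HasSum (fun i => ⟪f, y i⟫ • x i) f

open Submodule ContinuousLinearMap
open scoped Matrix

def blockCombination {κ ι R E : Type*} [Fintype κ] [Semiring R] [AddCommMonoid E] [Module R E]
    (M : Matrix κ κ R) (x : κ × ι → E) (p : κ × ι) : E :=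
  ∑ l, M l p.1 • x (l, p.2)

namespace HilbertBasis

section

variable {ι ι' 𝕜 E : Type*} [RCLike 𝕜] [NormedAddCommGroup E] [InnerProductSpace 𝕜 E]
  (b : HilbertBasis ι 𝕜 E)

theorem ext_continuousLinearMap {F : Type*} [NormedAddCommGroup F] [NormedSpace 𝕜 F]
    {f g : E →L[𝕜] F} (h : ∀ i, f (b i) = g (b i)) : f = g :=
  ext_on (dense_iff_topologicalClosure_eq_top.mpr b.dense_span) (Set.forall_mem_range.mpr h)

variable [CompleteSpace E]

protected def reindex (σ : ι ≃ ι') : HilbertBasis ι' 𝕜 E :=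
  HilbertBasis.mk (b.orthonormal.comp σ.symm σ.symm.injective)
    (by rw [EquivLike.range_comp]; exact b.dense_span.ge)

@[simp]
theorem coe_reindex (σ : ι ≃ ι') : ⇑(b.reindex σ) = b ∘ σ.symm :=
  HilbertBasis.coe_mk _ _

def permute (π : Equiv.Perm ι) : E ≃ₗᵢ[𝕜] E :=
  b.repr.trans (b.reindex π.symm).repr.symm

@[simp]
theorem permute_apply (π : Equiv.Perm ι) (i : ι) : b.permute π (b i) = b (π i) := by
  simp [permute, HilbertBasis.repr_self, HilbertBasis.repr_symm_single]

-- `(span (b '' sᶜ))ᗮ` is the closed span of `b '' s`, and being an orthogonal complement it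
-- comes with an orthogonal projection.
def proj (s : Set ι) : E →L[𝕜] E :=
  (span 𝕜 (b '' sᶜ))ᗮ.starProjection

theorem proj_apply (s : Set ι) (i : ι) : b.proj s (b i) = if i ∈ s then b i else 0 := by
  split_ifs with hi
  · refine starProjection_eq_self_iff.mpr ?_
    have := (isOrtho_span (𝕜 := 𝕜) (s := b '' sᶜ) (t := {b i})).mpr ?_
    · exact this.symm (subset_span rfl)
    rintro _ ⟨j, hj, rfl⟩ _ rfl
    exact b.orthonormal.inner_eq_zero (by rintro rfl; exact hj hi)
  · exact (starProjection_apply_eq_zero_iff _).mpr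
      (le_orthogonal_orthogonal _ (subset_span ⟨i, hi, rfl⟩))

end

section

variable {κ ι 𝕜 E : Type*} [Fintype κ] [DecidableEq κ] [RCLike 𝕜] [NormedAddCommGroup E]
  [InnerProductSpace 𝕜 E] [CompleteSpace E] (b : HilbertBasis (κ × ι) 𝕜 E)

-- The `(k, l)` summand is `M l k` times the partial isometry `b (k, n) ↦ b (l, n)`.
def blockDiagonal (M : Matrix κ κ 𝕜) : E →L[𝕜] E :=
  ∑ k, ∑ l, M l k •
    (b.permute ((Equiv.swap k l).prodCongr (.refl ι)) : E →L[𝕜] E) ∘L b.proj {p | p.1 = k}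

theorem blockDiagonal_apply (M : Matrix κ κ 𝕜) (p : κ × ι) :
    b.blockDiagonal M (b p) = blockCombination M b p := by
  obtain ⟨k, n⟩ := p
  simp [blockDiagonal, blockCombination, sum_apply, proj_apply, apply_ite, Finset.sum_ite_irrel]

theorem blockDiagonal_mul (M N : Matrix κ κ 𝕜) :
    b.blockDiagonal (M * N) = b.blockDiagonal M ∘L b.blockDiagonal N := by
  refine b.ext_continuousLinearMap fun p => ?_
  simp only [comp_apply, blockDiagonal_apply, blockCombination, map_sum, map_smul,
    Matrix.mul_apply, Finset.sum_smul, Finset.smul_sum, smul_smul]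
  rw [Finset.sum_comm]
  simp [mul_comm]

theorem blockDiagonal_one : b.blockDiagonal 1 = ContinuousLinearMap.id 𝕜 E :=
  b.ext_continuousLinearMap fun p => by
    simp [blockDiagonal_apply, blockCombination, Matrix.one_apply]

def blockDiagonalEquiv (M : (Matrix κ κ 𝕜)ˣ) : E ≃L[𝕜] E :=
  .equivOfInverse' (b.blockDiagonal M) (b.blockDiagonal ↑M⁻¹)
    (by rw [← blockDiagonal_mul, M.mul_inv, blockDiagonal_one])
    (by rw [← blockDiagonal_mul, M.inv_mul, blockDiagonal_one])

theorem blockDiagonalEquiv_apply (M : (Matrix κ κ 𝕜)ˣ) (p : κ × ι) :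
    b.blockDiagonalEquiv M (b p) = blockCombination (M : Matrix κ κ 𝕜) b p :=
  b.blockDiagonal_apply _ p

end

end HilbertBasis

def ContinuousLinearEquiv.adjoint {𝕜 E F : Type*} [RCLike 𝕜] [NormedAddCommGroup E]
    [InnerProductSpace 𝕜 E] [CompleteSpace E] [NormedAddCommGroup F] [InnerProductSpace 𝕜 F]
    [CompleteSpace F] (T : E ≃L[𝕜] F) : F ≃L[𝕜] E :=
  .equivOfInverse' (ContinuousLinearMap.adjoint (T : E →L[𝕜] F))
    (ContinuousLinearMap.adjoint (T.symm : F →L[𝕜] E))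
    (by rw [← adjoint_comp, T.coe_symm_comp_coe, adjoint_id])
    (by rw [← adjoint_comp, T.coe_comp_coe_symm, adjoint_id])

section

variable {H : Type*} [NormedAddCommGroup H] [InnerProductSpace ℂ H]

theorem inner_blockCombination {κ ι : Type*} [Fintype κ] [DecidableEq κ] [DecidableEq ι]
    {x y : κ × ι → H} (hxy : ∀ i j, ⟪x i, y j⟫ = if i = j then (1 : ℂ) else 0)
    {M N : Matrix κ κ ℂ} (hNM : Nᴴ * M = 1) (p q : κ × ι) :
    ⟪blockCombination M x p, blockCombination N y q⟫ = if p = q then 1 else 0 := by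
  obtain ⟨k, n⟩ := p
  obtain ⟨l, m⟩ := q
  have hlk := congrFun (congrFun hNM l) k
  simp only [Matrix.mul_apply, Matrix.conjTranspose_apply, Matrix.one_apply] at hlk
  simp only [blockCombination, inner_sum, sum_inner, inner_smul_left, inner_smul_right, hxy,
    Prod.mk.injEq]
  by_cases hnm : n = m
  · subst hnm
    simp only [and_true, mul_ite, mul_one, mul_zero, Finset.sum_ite_eq, Finset.mem_univ, if_true]
    convert hlk using 1
    · exact Finset.sum_congr rfl fun j _ => mul_comm _ _
    · exact if_congr eq_comm rfl rfl
  · simp [hnm]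

variable [CompleteSpace H]

namespace IsRieszBasis

theorem comp_equiv {ι ι' : Type*} {x : ι → H} (hx : IsRieszBasis x) (σ : ι' ≃ ι) :
    IsRieszBasis (x ∘ σ) := by
  obtain ⟨e, T, hT⟩ := hx
  exact ⟨e.reindex σ.symm, T, fun i => by simp [hT]⟩

theorem blockCombination {κ ι : Type*} [Fintype κ] [DecidableEq κ] {x : κ × ι → H}
    (hx : IsRieszBasis x) {M : Matrix κ κ ℂ} (hM : IsUnit M) :
    IsRieszBasis (blockCombination M x) := by
  obtain ⟨e, T, hT⟩ := hx
  obtain ⟨M, rfl⟩ := hM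
  refine ⟨e, (e.blockDiagonalEquiv M).trans T, fun p => ?_⟩
  simp [e.blockDiagonalEquiv_apply, _root_.blockCombination, hT]

/-- The biorthogonal family is `(T*)⁻¹ e` when `x = T e`. -/
theorem isDualRieszBasisPair {ι : Type*} {x y : ι → H} (hx : IsRieszBasis x)
    (hxy : ∀ i j, ⟪x i, y j⟫ = if i = j then (1 : ℂ) else 0) :
    IsDualRieszBasisPair x y := by
  obtain ⟨e, T, hT⟩ := hx
  have hy : ∀ j, y j = T.adjoint.symm (e j) := by
    intro j
    rw [ContinuousLinearEquiv.eq_symm_apply]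
    refine e.repr.injective (lp.ext (funext fun i => ?_))
    rw [e.repr_apply_apply, e.repr_apply_apply, orthonormal_iff_ite.mp e.orthonormal]
    change inner ℂ (e i) (ContinuousLinearMap.adjoint (T : H →L[ℂ] H) (y j)) = _
    rw [adjoint_inner_right, ContinuousLinearEquiv.coe_coe, ← hT, ← inner_conj_symm, hxy]
    split_ifs <;> simp
  refine ⟨⟨e, T, hT⟩, ⟨e, T.adjoint.symm, hy⟩, hxy, fun f => ?_⟩
  have hcoeff : ∀ i, ⟪f, y i⟫ = e.repr (T.symm f) i := fun i => by
    rw [hy, e.repr_apply_apply]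
    exact adjoint_inner_left (T.symm : H →L[ℂ] H) f (e i)
  simpa [hcoeff, hT] using (e.hasSum_repr (T.symm f)).mapL (T : H →L[ℂ] H)

end IsRieszBasis

theorem IsDualRieszBasisPair.symm {ι : Type*} {x y : ι → H} (h : IsDualRieszBasisPair x y) :
    IsDualRieszBasisPair y x :=
  h.2.1.isDualRieszBasisPair fun i j => by
    rw [← inner_conj_symm, h.2.2.1 j i]
    split_ifs <;> simp_all

end

def tripleIndex : Fin 3 × ℤ ≃ ℤ :=
  (Equiv.prodComm _ _).trans ((Int.divModEquiv 3).symm.trans (Equiv.subRight 1))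

theorem tripleIndex_apply (k : Fin 3) (n : ℤ) : tripleIndex (k, n) = 3 * n + k - 1 := by
  simp [tripleIndex]; ring

theorem stmt14_general {H : Type*} [NormedAddCommGroup H] [InnerProductSpace ℂ H]
    [CompleteSpace H]
    (x y : ℤ → H) (hxy : IsDualRieszBasisPair x y)
    (z w : Fin 3 × ℤ → H)
    (hz : ∀ i : Fin 3 × ℤ, z i =
      ![x (3 * i.2) - x (3 * i.2 - 1), x (3 * i.2),
        x (3 * i.2 + 1) - x (3 * i.2)] i.1)
    (hw : ∀ i : Fin 3 × ℤ, w i =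
      ![-y (3 * i.2 - 1), y (3 * i.2 - 1) + y (3 * i.2) + y (3 * i.2 + 1),
        y (3 * i.2 + 1)] i.1) :
    IsDualRieszBasisPair z w ∧
      ∀ F : H, HasSum (fun i : Fin 3 × ℤ => ⟪F, z i⟫ • w i) F := by
  obtain ⟨hx, -, hbi, -⟩ := hxy
  -- column `k` holds the coefficients of `z (k, n)`, resp. `w (k, n)`, on block `n`
  let M : Matrix (Fin 3) (Fin 3) ℂ := !![-1, 0, 0; 1, 1, -1; 0, 0, 1]
  let N : Matrix (Fin 3) (Fin 3) ℂ := !![-1, 1, 0; 0, 1, 0; 0, 1, 1]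
  have hNM : Nᴴ * M = 1 := by
    ext i j; fin_cases i <;> fin_cases j <;> simp [M, N, Matrix.mul_apply, Fin.sum_univ_three]
  have hz' : z = blockCombination M (x ∘ tripleIndex) := by
    ext ⟨k, n⟩
    fin_cases k <;>
      simp [hz, M, blockCombination, Fin.sum_univ_three, tripleIndex_apply, add_sub_assoc,
        ← sub_eq_add_neg, neg_add_eq_sub]
  have hw' : w = blockCombination N (y ∘ tripleIndex) := by
    ext ⟨k, n⟩
    fin_cases k <;>
      simp [hw, N, blockCombination, Fin.sum_univ_three, tripleIndex_apply, add_sub_assoc,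
        ← sub_eq_add_neg]
  have hbi' : ∀ p q, ⟪(x ∘ tripleIndex) p, (y ∘ tripleIndex) q⟫ =
      if p = q then (1 : ℂ) else 0 := fun p q => by simp [hbi, tripleIndex.injective.eq_iff]
  have hzR : IsRieszBasis z := hz' ▸
    (hx.comp_equiv tripleIndex).blockCombination (isUnit_of_mul_isUnit_right (hNM ▸ isUnit_one))
  have hpair : IsDualRieszBasisPair z w := hzR.isDualRieszBasisPair fun i j => by
    rw [hz', hw']
    convert inner_blockCombination hbi' hNM i j
  exact ⟨hpair, hpair.symm.2.2.2⟩

theorem stmt14 {H : Type*} [NormedAddCommGroup H] [InnerProductSpace ℂ H]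
    [CompleteSpace H] [TopologicalSpace.SeparableSpace H]
    (x y : ℤ → H) (hxy : IsDualRieszBasisPair x y)
    (z w : Fin 3 × ℤ → H)
    (hz : ∀ i : Fin 3 × ℤ, z i =
      ![x (3 * i.2) - x (3 * i.2 - 1), x (3 * i.2),
        x (3 * i.2 + 1) - x (3 * i.2)] i.1)
    (hw : ∀ i : Fin 3 × ℤ, w i =
      ![-y (3 * i.2 - 1), y (3 * i.2 - 1) + y (3 * i.2) + y (3 * i.2 + 1),
        y (3 * i.2 + 1)] i.1) :
    IsDualRieszBasisPair z w ∧
      ∀ F : H, HasSum (fun i : Fin 3 × ℤ => ⟪F, z i⟫ • w i) F :=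
  stmt14_general x y hxy z w hz hw
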